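/- Let r ≥ 3 and s ≥ ⌊r/2⌋, and let Mas(r,s) be the graph consisting of a clique R of size r partitioned into R' of size ⌈r/2⌉ and R'' of size ⌊r/2⌋, an independent set S of size s disjoint from R, and two additional vertices x, y, where x is adjacent to every vertex of S ∪ R' and y is adjacent to every vertex of S ∪ R''. Then mp(Mas(r,s)) = s + ⌈r/2⌉ and gp(Mas(r,s)) = r + s. -/
import Mathlib


open SimpleGraph

/-- A walk is an *induced (monophonic) path* if it is a path and vertices on the
walk are adjacent in `G` exactly when they are consecutive on the walk. -/
def IsInducedPathW {V : Type*} (G : SimpleGraph V) {u v : V} (p : G.Walk u v) : Prop :=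
  p.IsPath ∧ ∀ a b : V, a ∈ p.support → b ∈ p.support → (G.Adj a b ↔ p.toSubgraph.Adj a b)

/-- A walk is a *geodesic* if it is a shortest path between its endpoints. -/
def IsGeodesicW {V : Type*} (G : SimpleGraph V) {u v : V} (p : G.Walk u v) : Prop :=
  p.IsPath ∧ p.length = G.dist u v

/-- A set of vertices is in *monophonic position* if no induced path of `G`
contains more than two of its vertices. -/
def IsMpSet {V : Type*} (G : SimpleGraph V) (S : Set V) : Prop :=
  ∀ ⦃u v : V⦄ (p : G.Walk u v), IsInducedPathW G p → (S ∩ {x | x ∈ p.support}).ncard ≤ 2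

/-- A set of vertices is in *general position* if no geodesic of `G` contains
more than two of its vertices. -/
def IsGpSet {V : Type*} (G : SimpleGraph V) (S : Set V) : Prop :=
  ∀ ⦃u v : V⦄ (p : G.Walk u v), IsGeodesicW G p → (S ∩ {x | x ∈ p.support}).ncard ≤ 2

/-- The monophonic position number `mp(G)`. -/
noncomputable def mpNum {V : Type*} (G : SimpleGraph V) : ℕ :=
  sSup {n | ∃ S : Set V, IsMpSet G S ∧ S.ncard = n}

/-- The general position number `gp(G)`. -/
noncomputable def gpNum {V : Type*} (G : SimpleGraph V) : ℕ :=
  sSup {n | ∃ S : Set V, IsGpSet G S ∧ S.ncard = n}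

/-- The graph `Mas(r,s)`: a clique `R` of size `r` split into `R'` (the first
`⌈r/2⌉` vertices) and `R''`, an independent set `S` of size `s`, and two extra
vertices `x = inr (inr 0)` and `y = inr (inr 1)`, where `x` is joined to
`S ∪ R'` and `y` is joined to `S ∪ R''`. -/
def masGraph (r s : ℕ) : SimpleGraph (Fin r ⊕ (Fin s ⊕ Fin 2)) :=
  SimpleGraph.fromRel fun u v =>
    match u, v with
    | .inl i, .inl j => i ≠ j
    | .inl i, .inr (.inr z) =>
        ((z : ℕ) = 0 ∧ (i : ℕ) < (r + 1) / 2) ∨ ((z : ℕ) = 1 ∧ (r + 1) / 2 ≤ (i : ℕ))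
    | .inr (.inl _), .inr (.inr _) => True
    | _, _ => False
namespace MasAux

variable {r s : ℕ}

abbrev VV (r s : ℕ) := Fin r ⊕ (Fin s ⊕ Fin 2)

def vx : VV r s := .inr (.inr 0)
def vy : VV r s := .inr (.inr 1)

lemma adj_ll {i j : Fin r} : (masGraph r s).Adj (.inl i) (.inl j) ↔ i ≠ j := by
  simp [masGraph, Sum.inl.injEq]
  tauto

lemma adj_lx {i : Fin r} : (masGraph r s).Adj (.inl i) (vx) ↔ (i : ℕ) < (r+1)/2 := by
  simp [masGraph, vx]

lemma adj_ly {i : Fin r} : (masGraph r s).Adj (.inl i) (vy) ↔ (r+1)/2 ≤ (i : ℕ) := by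
  simp [masGraph, vy]

lemma adj_sx {j : Fin s} : (masGraph r s).Adj (.inr (.inl j)) vx := by
  simp [masGraph, vx]

lemma adj_sy {j : Fin s} : (masGraph r s).Adj (.inr (.inl j)) vy := by
  simp [masGraph, vy]

lemma not_adj_ls {i : Fin r} {j : Fin s} : ¬ (masGraph r s).Adj (.inl i) (.inr (.inl j)) := by
  simp [masGraph]

lemma not_adj_ss {j k : Fin s} : ¬ (masGraph r s).Adj (.inr (.inl j)) (.inr (.inl k)) := by
  simp [masGraph]

lemma not_adj_xy : ¬ (masGraph r s).Adj (vx : VV r s) vy := by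
  simp [masGraph, vx, vy]

lemma not_adj_zz {z w : Fin 2} : ¬ (masGraph r s).Adj (.inr (.inr z)) (.inr (.inr w)) := by
  simp [masGraph]

end MasAux

section WalkAux

variable {α : Type*} {G : SimpleGraph α}

lemma getVert_mem_support' {u v : α} (p : G.Walk u v) (i : ℕ) :
    p.getVert i ∈ p.support := by
  induction p generalizing i with
  | nil => simp [SimpleGraph.Walk.getVert]
  | cons h q ih =>
    cases i with
    | zero => simp [SimpleGraph.Walk.getVert]
    | succ n => simp only [SimpleGraph.Walk.getVert, SimpleGraph.Walk.support_cons,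
        List.mem_cons]; exact Or.inr (ih n)

lemma getVert_injOn' {u v : α} {p : G.Walk u v} (hp : p.IsPath) :
    ∀ i, i ≤ p.length → ∀ j, j ≤ p.length → p.getVert i = p.getVert j → i = j := by
  induction p with
  | nil => intro i hi j hj _; simp_all
  | cons h q ih =>
    rw [SimpleGraph.Walk.cons_isPath_iff] at hp
    intro i hi j hj hij
    cases i with
    | zero =>
      cases j with
      | zero => rfl
      | succ m =>
        exfalso
        simp only [SimpleGraph.Walk.getVert] at hij
        exact hp.2 (hij ▸ getVert_mem_support' q m)
    | succ n =>
      cases j with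
      | zero =>
        exfalso
        simp only [SimpleGraph.Walk.getVert] at hij
        exact hp.2 (hij ▸ getVert_mem_support' q n)
      | succ m =>
        have := ih hp.1 n (by simpa using hi) m (by simpa using hj)
          (by simpa [SimpleGraph.Walk.getVert] using hij)
        omega

lemma induced_consecutive {u v : α} {p : G.Walk u v} (hp : IsInducedPathW G p)
    {i j : ℕ} (hi : i ≤ p.length) (hj : j ≤ p.length)
    (hadj : G.Adj (p.getVert i) (p.getVert j)) : j = i + 1 ∨ i = j + 1 := by
  have hsub := (hp.2 _ _ (getVert_mem_support' p i) (getVert_mem_support' p j)).mp hadj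
  rw [SimpleGraph.Walk.toSubgraph_adj_iff] at hsub
  obtain ⟨k, hk, hkl⟩ := hsub
  rw [Sym2.eq_iff] at hk
  rcases hk with ⟨h1, h2⟩ | ⟨h1, h2⟩
  · have := getVert_injOn' hp.1 k (by omega) i hi h1
    have := getVert_injOn' hp.1 (k+1) (by omega) j hj h2
    omega
  · have := getVert_injOn' hp.1 k (by omega) j hj h1
    have := getVert_injOn' hp.1 (k+1) (by omega) i hi h2
    omega

lemma exists_three_of_two_lt {A : Set α} (h : 2 < A.ncard) :
    ∃ a b c, a ∈ A ∧ b ∈ A ∧ c ∈ A ∧ a ≠ b ∧ a ≠ c ∧ b ≠ c := by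
  obtain ⟨t, hts, htc⟩ := Set.exists_subset_card_eq (n := 3) h
  obtain ⟨a, b, c, hab, hac, hbc, rfl⟩ := Set.ncard_eq_three.mp htc
  exact ⟨a, b, c, hts (by simp), hts (by simp), hts (by simp), hab, hac, hbc⟩

end WalkAux

namespace MasAux

variable {r s : ℕ}

lemma adj_s_cases {w : VV r s} {j : Fin s} (h : (masGraph r s).Adj w (.inr (.inl j))) :
    w = vx ∨ w = vy := by
  rcases w with i | j' | z
  · exact absurd h not_adj_ls
  · exact absurd h not_adj_ss
  · fin_cases z
    · exact Or.inl rfl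
    · exact Or.inr rfl

lemma adj_x_cases {w : VV r s} (h : (masGraph r s).Adj w vx) :
    (∃ j, w = .inr (.inl j)) ∨ ∃ i : Fin r, (i : ℕ) < (r+1)/2 ∧ w = .inl i := by
  rcases w with i | j' | z
  · exact Or.inr ⟨i, adj_lx.mp h, rfl⟩
  · exact Or.inl ⟨j', rfl⟩
  · exact absurd h not_adj_zz

lemma adj_y_cases {w : VV r s} (h : (masGraph r s).Adj w vy) :
    (∃ j, w = .inr (.inl j)) ∨ ∃ i : Fin r, (r+1)/2 ≤ (i : ℕ) ∧ w = .inl i := by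
  rcases w with i | j' | z
  · exact Or.inr ⟨i, adj_ly.mp h, rfl⟩
  · exact Or.inl ⟨j', rfl⟩
  · exact absurd h not_adj_zz

lemma adj_l_cases {w : VV r s} {i : Fin r} (h : (masGraph r s).Adj w (.inl i)) :
    (∃ i', w = .inl i') ∨ w = vx ∨ w = vy := by
  rcases w with i' | j' | z
  · exact Or.inl ⟨i', rfl⟩
  · exact absurd h.symm not_adj_ls
  · fin_cases z
    · exact Or.inr (Or.inl rfl)
    · exact Or.inr (Or.inr rfl)

end MasAux

namespace MasAux

section Claims

variable {r s : ℕ} {u v : VV r s} {p : (masGraph r s).Walk u v}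
  {i j k : ℕ} {a b : Fin s}

lemma claimA (hp : IsInducedPathW (masGraph r s) p) (hij : i < j) (hj : j ≤ p.length)
    (ha : p.getVert i = .inr (.inl a)) (hb : p.getVert j = .inr (.inl b)) :
    j = i + 2 ∧ (p.getVert (i+1) = vx ∨ p.getVert (i+1) = vy) := by
  have h1 : (masGraph r s).Adj (p.getVert i) (p.getVert (i+1)) :=
    p.adj_getVert_succ (by omega)
  rw [ha] at h1
  have hm := adj_s_cases h1.symm
  have hadj : (masGraph r s).Adj (p.getVert (i+1)) (p.getVert j) := by
    rcases hm with hx | hy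
    · rw [hx, hb]; exact adj_sx.symm
    · rw [hy, hb]; exact adj_sy.symm
  have := induced_consecutive hp (by omega) hj hadj
  exact ⟨by omega, hm⟩

lemma adj_xyS {m : VV r s} (hm : m = vx ∨ m = vy) (c : Fin s) :
    (masGraph r s).Adj m (.inr (.inl c)) := by
  rcases hm with rfl | rfl
  · exact adj_sx.symm
  · exact adj_sy.symm

lemma claimB (hp : IsInducedPathW (masGraph r s) p) (hij : i < j) (hj : j ≤ p.length)
    (ha : p.getVert i = .inr (.inl a)) (hb : p.getVert j = .inr (.inl b)) :
    i = 0 ∧ p.length = 2 := by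
  obtain ⟨hj2, hm⟩ := claimA hp hij hj ha hb
  subst hj2
  have hi0 : i = 0 := by
    by_contra hi0
    have hprev : (masGraph r s).Adj (p.getVert (i-1)) (p.getVert i) := by
      have := p.adj_getVert_succ (i := i - 1) (by omega)
      rwa [show i - 1 + 1 = i by omega] at this
    rw [ha] at hprev
    have hprev2 : (masGraph r s).Adj (p.getVert (i-1)) (p.getVert (i+2)) := by
      rw [hb]; exact adj_xyS (adj_s_cases hprev) b
    have := induced_consecutive hp (i := i-1) (j := i+2) (by omega) hj hprev2
    omega
  subst hi0
  refine ⟨rfl, ?_⟩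
  by_contra hn
  have hn3 : 3 ≤ p.length := by omega
  have hnext : (masGraph r s).Adj (p.getVert 2) (p.getVert 3) :=
    p.adj_getVert_succ (by omega)
  rw [hb] at hnext
  have hnext2 : (masGraph r s).Adj (p.getVert 3) (p.getVert 0) := by
    rw [ha]; exact adj_xyS (adj_s_cases hnext.symm) a
  have := induced_consecutive hp (i := 3) (j := 0) (by omega) (by omega) hnext2
  omega

lemma claimC (hp : IsInducedPathW (masGraph r s) p)
    {a b c : Fin r} (hi : i ≤ p.length) (hj : j ≤ p.length) (hk : k ≤ p.length)
    (hij : i ≠ j) (hik : i ≠ k) (hjk : j ≠ k)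
    (ha : p.getVert i = .inl a) (hb : p.getVert j = .inl b) (hc : p.getVert k = .inl c) :
    False := by
  have hne : ∀ {i' j' : ℕ} {a' b' : Fin r}, i' ≤ p.length → j' ≤ p.length → i' ≠ j' →
      p.getVert i' = .inl a' → p.getVert j' = .inl b' → (masGraph r s).Adj (p.getVert i') (p.getVert j') := by
    intro i' j' a' b' hi' hj' hne' ha' hb'
    rw [ha', hb']
    refine adj_ll.mpr ?_
    rintro rfl
    exact hne' (getVert_injOn' hp.1 i' hi' j' hj' (ha'.trans hb'.symm))
  have h1 := induced_consecutive hp hi hj (hne hi hj hij ha hb)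
  have h2 := induced_consecutive hp hj hk (hne hj hk hjk hb hc)
  have h3 := induced_consecutive hp hi hk (hne hi hk hik ha hc)
  omega

lemma claimD (hp : IsInducedPathW (masGraph r s) p) {a : Fin s} {b b' : Fin r}
    (hi : i ≤ p.length) (hj1 : j + 1 ≤ p.length) (hij : i ≠ j) (hij1 : i ≠ j + 1)
    (ha : p.getVert i = .inr (.inl a)) (hb : p.getVert j = .inl b)
    (hb1 : p.getVert (j+1) = .inl b')
    (hbc : (b:ℕ) < (r+1)/2) (hb'c : (b':ℕ) < (r+1)/2) : False := by
  rcases lt_or_gt_of_ne hij with hlt | hgt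
  · -- i < j
    have h1 : (masGraph r s).Adj (p.getVert i) (p.getVert (i+1)) :=
      p.adj_getVert_succ (by omega)
    rw [ha] at h1
    rcases adj_s_cases h1.symm with hx | hy
    · have c1 : (masGraph r s).Adj (p.getVert (i+1)) (p.getVert j) := by
        rw [hx, hb]; exact (adj_lx.mpr hbc).symm
      have c2 : (masGraph r s).Adj (p.getVert (i+1)) (p.getVert (j+1)) := by
        rw [hx, hb1]; exact (adj_lx.mpr hb'c).symm
      have t1 := induced_consecutive hp (i := i+1) (by omega) (by omega) c1
      have t2 := induced_consecutive hp (i := i+1) (by omega) (by omega) c2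
      omega
    · -- p.getVert (i+1) = vy
      have hne1 : i + 1 ≠ j := by
        intro h; rw [← h, hy] at hb; simp [vy] at hb
      have h2 : (masGraph r s).Adj (p.getVert (i+1)) (p.getVert (i+2)) :=
        p.adj_getVert_succ (by omega)
      rw [hy] at h2
      rcases adj_y_cases h2.symm with ⟨c2, hc2⟩ | ⟨t, htc, ht⟩
      · have := claimB hp (show i < i + 2 by omega) (by omega) ha hc2
        omega
      · by_cases hj2 : i + 2 = j
        · rw [hj2, hb] at ht
          rw [Sum.inl.injEq] at ht; subst ht; omega
        · have htb : t ≠ b := by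
            intro h; subst h; omega
          have htb' : t ≠ b' := by
            intro h; subst h; omega
          have hne2 : i + 2 ≠ j + 1 := by omega
          have d1 : (masGraph r s).Adj (p.getVert (i+2)) (p.getVert j) := by
            rw [ht, hb]; exact adj_ll.mpr htb
          have d2 : (masGraph r s).Adj (p.getVert (i+2)) (p.getVert (j+1)) := by
            rw [ht, hb1]; exact adj_ll.mpr htb'
          have t1 := induced_consecutive hp (i := i+2) (by omega) (by omega) d1
          have t2 := induced_consecutive hp (i := i+2) (by omega) (by omega) d2
          omega
  · -- j + 1 < i
    have hgt' : j + 1 < i := by omega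
    have h1 : (masGraph r s).Adj (p.getVert (i-1)) (p.getVert i) := by
      have := p.adj_getVert_succ (i := i - 1) (by omega)
      rwa [show i - 1 + 1 = i by omega] at this
    rw [ha] at h1
    rcases adj_s_cases h1 with hx | hy
    · have hne1 : i - 1 ≠ j + 1 := by
        intro h; rw [h, hb1] at hx; simp [vx] at hx
      have c1 : (masGraph r s).Adj (p.getVert (i-1)) (p.getVert j) := by
        rw [hx, hb]; exact (adj_lx.mpr hbc).symm
      have t1 := induced_consecutive hp (i := i-1) (by omega) (by omega) c1
      omega
    · have hne1 : i - 1 ≠ j + 1 := by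
        intro h; rw [h, hb1] at hy; simp [vy] at hy
      have h2 : (masGraph r s).Adj (p.getVert (i-2)) (p.getVert (i-1)) := by
        have := p.adj_getVert_succ (i := i - 2) (by omega)
        rwa [show i - 2 + 1 = i - 1 by omega] at this
      rw [hy] at h2
      rcases adj_y_cases h2 with ⟨c2, hc2⟩ | ⟨t, htc, ht⟩
      · have := claimB hp (show i - 2 < i by omega) hi hc2 ha
        omega
      · have hne2 : i - 2 ≠ j := by
          intro h; rw [h, hb] at ht
          rw [Sum.inl.injEq] at ht; subst ht; omega
        have hne3 : i - 2 ≠ j + 1 := by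
          intro h; rw [h, hb1] at ht
          rw [Sum.inl.injEq] at ht; subst ht; omega
        have htb : t ≠ b := by intro h; subst h; omega
        have d1 : (masGraph r s).Adj (p.getVert (i-2)) (p.getVert j) := by
          rw [ht, hb]; exact adj_ll.mpr htb
        have t1 := induced_consecutive hp (i := i-2) (by omega) (by omega) d1
        omega

end Claims

end MasAux

section PathBuild

variable {α : Type*} {G : SimpleGraph α}

lemma ncard_le_two_of_subset_pair {A : Set α} {a b : α} (h : A ⊆ {a, b}) : A.ncard ≤ 2 := by
  refine le_trans (Set.ncard_le_ncard h ((Set.finite_singleton b).insert a)) ?_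
  exact le_trans (Set.ncard_insert_le a {b}) (by simp)

lemma mp_no_three {M : Set α} (hM : IsMpSet G M) {u v : α} {p : G.Walk u v}
    (hp : IsInducedPathW G p) {a b c : α}
    (haM : a ∈ M) (hbM : b ∈ M) (hcM : c ∈ M)
    (has : a ∈ p.support) (hbs : b ∈ p.support) (hcs : c ∈ p.support)
    (hab : a ≠ b) (hac : a ≠ c) (hbc : b ≠ c) : False := by
  have h3 : ({a, b, c} : Set α) ⊆ M ∩ {x | x ∈ p.support} := by
    rintro w (rfl | rfl | rfl) <;> exact ⟨‹_›, ‹_›⟩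
  have hfin : (M ∩ {x | x ∈ p.support}).Finite :=
    Set.Finite.inter_of_right (p.support.finite_toSet) M
  have h4 := Set.ncard_le_ncard h3 hfin
  rw [Set.ncard_eq_three.mpr ⟨a, b, c, hab, hac, hbc, rfl⟩] at h4
  have := hM p hp
  omega

lemma gp_no_three {M : Set α} (hM : IsGpSet G M) {u v : α} {p : G.Walk u v}
    (hp : IsGeodesicW G p) {a b c : α}
    (haM : a ∈ M) (hbM : b ∈ M) (hcM : c ∈ M)
    (has : a ∈ p.support) (hbs : b ∈ p.support) (hcs : c ∈ p.support)
    (hab : a ≠ b) (hac : a ≠ c) (hbc : b ≠ c) : False := by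
  have h3 : ({a, b, c} : Set α) ⊆ M ∩ {x | x ∈ p.support} := by
    rintro w (rfl | rfl | rfl) <;> exact ⟨‹_›, ‹_›⟩
  have hfin : (M ∩ {x | x ∈ p.support}).Finite :=
    Set.Finite.inter_of_right (p.support.finite_toSet) M
  have h4 := Set.ncard_le_ncard h3 hfin
  rw [Set.ncard_eq_three.mpr ⟨a, b, c, hab, hac, hbc, rfl⟩] at h4
  have := hM p hp
  omega

lemma induced2 {a b c : α} (hab : G.Adj a b) (hbc : G.Adj b c) (hac : ¬ G.Adj a c)
    (hne : a ≠ c) :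
    IsInducedPathW G (SimpleGraph.Walk.cons hab (SimpleGraph.Walk.cons hbc SimpleGraph.Walk.nil)) := by
  have hca : ¬ G.Adj c a := fun h => hac h.symm
  have h1 : a ≠ b := hab.ne
  have h2 : b ≠ c := hbc.ne
  constructor
  · simp [SimpleGraph.Walk.isPath_def, h1, h2, hne, Ne.symm h1, Ne.symm h2, Ne.symm hne]
  · intro w1 w2 hw1 hw2
    simp only [SimpleGraph.Walk.support_cons, SimpleGraph.Walk.support_nil, List.mem_cons,
      List.mem_singleton, List.not_mem_nil, or_false] at hw1 hw2
    rcases hw1 with rfl | rfl | rfl <;> rcases hw2 with rfl | rfl | rfl <;>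
      simp_all [SimpleGraph.Walk.toSubgraph, SimpleGraph.Subgraph.sup_adj,
        SimpleGraph.subgraphOfAdj_adj, SimpleGraph.singletonSubgraph_adj, Sym2.eq_iff,
        hab.symm, hbc.symm] <;> tauto

lemma induced3 {a b c d : α} (hab : G.Adj a b) (hbc : G.Adj b c) (hcd : G.Adj c d)
    (hac : ¬ G.Adj a c) (had : ¬ G.Adj a d) (hbd : ¬ G.Adj b d)
    (hnac : a ≠ c) (hnad : a ≠ d) (hnbd : b ≠ d) :
    IsInducedPathW G (SimpleGraph.Walk.cons hab (SimpleGraph.Walk.cons hbc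
      (SimpleGraph.Walk.cons hcd SimpleGraph.Walk.nil))) := by
  have h1 : a ≠ b := hab.ne
  have h2 : b ≠ c := hbc.ne
  have h3 : c ≠ d := hcd.ne
  have hca : ¬ G.Adj c a := fun h => hac h.symm
  have hda : ¬ G.Adj d a := fun h => had h.symm
  have hdb : ¬ G.Adj d b := fun h => hbd h.symm
  constructor
  · simp [SimpleGraph.Walk.isPath_def, h1, h2, h3, hnac, hnad, hnbd,
      Ne.symm h1, Ne.symm h2, Ne.symm h3, Ne.symm hnac, Ne.symm hnad, Ne.symm hnbd]
  · intro w1 w2 hw1 hw2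
    simp only [SimpleGraph.Walk.support_cons, SimpleGraph.Walk.support_nil, List.mem_cons,
      List.mem_singleton, List.not_mem_nil, or_false] at hw1 hw2
    rcases hw1 with rfl | rfl | rfl | rfl <;> rcases hw2 with rfl | rfl | rfl | rfl <;>
      simp_all [SimpleGraph.Walk.toSubgraph, SimpleGraph.Subgraph.sup_adj,
        SimpleGraph.subgraphOfAdj_adj, SimpleGraph.singletonSubgraph_adj, Sym2.eq_iff,
        hab.symm, hbc.symm, hcd.symm] <;> tauto

lemma geo2 {a b c : α} (hab : G.Adj a b) (hbc : G.Adj b c) (hac : ¬ G.Adj a c)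
    (hne : a ≠ c) :
    IsGeodesicW G (SimpleGraph.Walk.cons hab (SimpleGraph.Walk.cons hbc SimpleGraph.Walk.nil)) := by
  have h1 : a ≠ b := hab.ne
  have h2 : b ≠ c := hbc.ne
  refine ⟨by simp [SimpleGraph.Walk.isPath_def, h1, h2, hne, Ne.symm h1, Ne.symm h2, Ne.symm hne], ?_⟩
  have hle : G.dist a c ≤ 2 := by
    have := SimpleGraph.dist_le (SimpleGraph.Walk.cons hab (SimpleGraph.Walk.cons hbc SimpleGraph.Walk.nil))
    simpa using this
  have hne0 : G.dist a c ≠ 0 := by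
    intro h0
    rcases SimpleGraph.dist_eq_zero_iff_eq_or_not_reachable.mp h0 with h' | h'
    · exact hne h'
    · exact h' ⟨SimpleGraph.Walk.cons hab (SimpleGraph.Walk.cons hbc SimpleGraph.Walk.nil)⟩
  have hne1 : G.dist a c ≠ 1 := fun h' => hac (SimpleGraph.dist_eq_one_iff_adj.mp h')
  simp only [SimpleGraph.Walk.length_cons, SimpleGraph.Walk.length_nil]
  omega

end PathBuild

namespace MasAux

variable (r s : ℕ)

def R1set : Set (VV r s) := {w | ∃ i : Fin r, (i:ℕ) < (r+1)/2 ∧ w = .inl i}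
def R2set : Set (VV r s) := {w | ∃ i : Fin r, (r+1)/2 ≤ (i:ℕ) ∧ w = .inl i}
def Rset : Set (VV r s) := {w | ∃ i : Fin r, w = .inl i}
def Sset : Set (VV r s) := {w | ∃ j : Fin s, w = .inr (.inl j)}
def XYset : Set (VV r s) := ({vx, vy} : Set (VV r s))

variable {r s}

lemma ncard_Sset : (Sset r s).ncard = s := by
  have heq : Sset r s = Set.range (fun j : Fin s => (Sum.inr (Sum.inl j) : VV r s)) := by
    ext w; simp [Sset, eq_comm]
  rw [heq, ← Set.image_univ,
    Set.ncard_image_of_injective _ (fun a b h => by simpa using h)]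
  simp [Set.ncard_univ]

lemma ncard_Rset : (Rset r s).ncard = r := by
  have heq : Rset r s = Set.range (fun i : Fin r => (Sum.inl i : VV r s)) := by
    ext w; simp [Rset, eq_comm]
  rw [heq, ← Set.image_univ,
    Set.ncard_image_of_injective _ (fun a b h => by simpa using h)]
  simp [Set.ncard_univ]

lemma ncard_R1set (h : (r+1)/2 ≤ r) : (R1set r s).ncard = (r+1)/2 := by
  have heq : R1set r s = Set.range
      (fun k : Fin ((r+1)/2) => (Sum.inl ⟨k.1, lt_of_lt_of_le k.2 h⟩ : VV r s)) := by
    ext w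
    constructor
    · rintro ⟨i, hi, rfl⟩
      exact ⟨⟨i.1, hi⟩, by simp⟩
    · rintro ⟨k, rfl⟩
      exact ⟨⟨k.1, lt_of_lt_of_le k.2 h⟩, k.2, rfl⟩
  rw [heq, ← Set.image_univ,
    Set.ncard_image_of_injective _ (fun a b hab => by
      simp only [Sum.inl.injEq, Fin.mk.injEq] at hab; exact Fin.ext hab)]
  simp [Set.ncard_univ]

lemma ncard_R2set (h : (r+1)/2 ≤ r) : (R2set r s).ncard = r - (r+1)/2 := by
  have heq : R2set r s = Set.range
      (fun k : Fin (r - (r+1)/2) =>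
        (Sum.inl ⟨(r+1)/2 + k.1, by omega⟩ : VV r s)) := by
    ext w
    constructor
    · rintro ⟨i, hi, rfl⟩
      refine ⟨⟨i.1 - (r+1)/2, by omega⟩, ?_⟩
      simp only [Sum.inl.injEq]
      exact Fin.ext (by simp; omega)
    · rintro ⟨k, rfl⟩
      exact ⟨⟨(r+1)/2 + k.1, by omega⟩, by simp, rfl⟩
  rw [heq, ← Set.image_univ,
    Set.ncard_image_of_injective _ (fun a b hab => by
      simp only [Sum.inl.injEq, Fin.mk.injEq] at hab; exact Fin.ext (by omega))]
  simp [Set.ncard_univ]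

lemma ncard_XYset : (XYset r s).ncard ≤ 2 :=
  ncard_le_two_of_subset_pair (by intro w hw; exact hw)

lemma ncard_le_parts (M : Set (VV r s)) :
    M.ncard ≤ (M ∩ R1set r s).ncard + (M ∩ R2set r s).ncard
      + (M ∩ Sset r s).ncard + (M ∩ XYset r s).ncard := by
  have hcov : M ⊆ (M ∩ R1set r s) ∪ (M ∩ R2set r s) ∪ (M ∩ Sset r s) ∪ (M ∩ XYset r s) := by
    intro w hw
    rcases w with i | j | z
    · by_cases hi : (i:ℕ) < (r+1)/2
      · exact Or.inl (Or.inl (Or.inl ⟨hw, i, hi, rfl⟩))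
      · exact Or.inl (Or.inl (Or.inr ⟨hw, i, by omega, rfl⟩))
    · exact Or.inl (Or.inr ⟨hw, j, rfl⟩)
    · fin_cases z
      · exact Or.inr ⟨hw, Or.inl rfl⟩
      · exact Or.inr ⟨hw, Or.inr rfl⟩
  have h1 := Set.ncard_le_ncard hcov (Set.toFinite _)
  have h2 := Set.ncard_union_le ((M ∩ R1set r s) ∪ (M ∩ R2set r s) ∪ (M ∩ Sset r s)) (M ∩ XYset r s)
  have h3 := Set.ncard_union_le ((M ∩ R1set r s) ∪ (M ∩ R2set r s)) (M ∩ Sset r s)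
  have h4 := Set.ncard_union_le (M ∩ R1set r s) (M ∩ R2set r s)
  omega

lemma ncard_inter_R1 (M : Set (VV r s)) (h : (r+1)/2 ≤ r) :
    (M ∩ R1set r s).ncard ≤ (r+1)/2 := by
  have := Set.ncard_le_ncard (Set.inter_subset_right (s := M) (t := R1set r s)) (Set.toFinite _)
  rw [ncard_R1set h] at this; exact this

lemma ncard_inter_R2 (M : Set (VV r s)) (h : (r+1)/2 ≤ r) :
    (M ∩ R2set r s).ncard ≤ r - (r+1)/2 := by
  have := Set.ncard_le_ncard (Set.inter_subset_right (s := M) (t := R2set r s)) (Set.toFinite _)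
  rw [ncard_R2set h] at this; exact this

lemma ncard_inter_S (M : Set (VV r s)) : (M ∩ Sset r s).ncard ≤ s := by
  have := Set.ncard_le_ncard (Set.inter_subset_right (s := M) (t := Sset r s)) (Set.toFinite _)
  rw [ncard_Sset] at this; exact this

lemma ncard_inter_XY (M : Set (VV r s)) : (M ∩ XYset r s).ncard ≤ 2 :=
  ncard_le_two_of_subset_pair (fun w hw => hw.2)

lemma ncard_SR1 (h : (r+1)/2 ≤ r) : (Sset r s ∪ R1set r s).ncard = s + (r+1)/2 := by
  rw [Set.ncard_union_eq ?_ (Set.toFinite _) (Set.toFinite _), ncard_Sset, ncard_R1set h]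
  rw [Set.disjoint_left]
  rintro w ⟨j, rfl⟩ ⟨i, hi, h'⟩
  simp at h'

lemma ncard_RS : (Rset r s ∪ Sset r s).ncard = r + s := by
  rw [Set.ncard_union_eq ?_ (Set.toFinite _) (Set.toFinite _), ncard_Rset, ncard_Sset]
  rw [Set.disjoint_left]
  rintro w ⟨i, rfl⟩ ⟨j, h'⟩
  simp at h'

end MasAux

namespace MasAux

section MpLower

variable {r s : ℕ} {u v : VV r s} {p : (masGraph r s).Walk u v}

lemma claimSS (hp : IsInducedPathW (masGraph r s) p) {ia ib ic : ℕ} {a b : Fin s}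
    (hia : ia ≤ p.length) (hib : ib ≤ p.length) (hic : ic ≤ p.length)
    (hfa : p.getVert ia = .inr (.inl a)) (hfb : p.getVert ib = .inr (.inl b))
    (hne : ia ≠ ib) (hca : ic ≠ ia) (hcb : ic ≠ ib)
    (hw : (∃ j : Fin s, p.getVert ic = .inr (.inl j)) ∨
      (∃ i : Fin r, p.getVert ic = .inl i)) : False := by
  have key : ∀ {i j : ℕ} {a' b' : Fin s}, i < j → j ≤ p.length →
      p.getVert i = .inr (.inl a') → p.getVert j = .inr (.inl b') →
      i = 0 ∧ j = 2 ∧ p.length = 2 ∧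
        (p.getVert 1 = vx ∨ p.getVert 1 = vy) := by
    intro i j a' b' hij hj hfa' hfb'
    obtain ⟨h0, hlen⟩ := claimB hp hij hj hfa' hfb'
    obtain ⟨hj2, hmid⟩ := claimA hp hij hj hfa' hfb'
    subst h0
    exact ⟨rfl, by omega, hlen, by simpa using hmid⟩
  have hfacts : ia ∈ ({0, 2} : Set ℕ) ∧ ib ∈ ({0, 2} : Set ℕ) ∧ p.length = 2 ∧
      (p.getVert 1 = vx ∨ p.getVert 1 = vy) := by
    rcases lt_or_gt_of_ne hne with h | h
    · obtain ⟨h1, h2, h3, h4⟩ := key h hib hfa hfb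
      exact ⟨by simp [h1], by simp [h2], h3, h4⟩
    · obtain ⟨h1, h2, h3, h4⟩ := key h hia hfb hfa
      exact ⟨by simp [h2], by simp [h1], h3, h4⟩
  obtain ⟨hia2, hib2, hlen, hmid⟩ := hfacts
  simp only [Set.mem_insert_iff, Set.mem_singleton_iff] at hia2 hib2
  have hic1 : ic = 1 := by omega
  rw [hic1] at hw
  rcases hw with ⟨j0, hj0⟩ | ⟨i0, hi0⟩
  · rcases hmid with h | h <;> rw [h] at hj0 <;> simp [vx, vy] at hj0
  · rcases hmid with h | h <;> rw [h] at hi0 <;> simp [vx, vy] at hi0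

lemma claimSRR (hp : IsInducedPathW (masGraph r s) p) {ia ib ic : ℕ} {a : Fin s}
    {b b' : Fin r}
    (hia : ia ≤ p.length) (hib : ib ≤ p.length) (hic : ic ≤ p.length)
    (hfa : p.getVert ia = .inr (.inl a)) (hfb : p.getVert ib = .inl b)
    (hfc : p.getVert ic = .inl b')
    (hab : ia ≠ ib) (hac : ia ≠ ic) (hbc : ib ≠ ic)
    (hbv : (b:ℕ) < (r+1)/2) (hbv' : (b':ℕ) < (r+1)/2) : False := by
  have hbb' : b ≠ b' := by
    rintro rfl
    exact hbc (getVert_injOn' hp.1 ib hib ic hic (hfb.trans hfc.symm))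
  have hadj : (masGraph r s).Adj (p.getVert ib) (p.getVert ic) := by
    rw [hfb, hfc]; exact adj_ll.mpr hbb'
  rcases induced_consecutive hp hib hic hadj with h | h
  · exact claimD hp hia (h ▸ hic) hab (h ▸ hac) hfa hfb (h ▸ hfc) hbv hbv'
  · exact claimD hp hia (h ▸ hib) hac (h ▸ hab) hfa hfc (h ▸ hfb) hbv' hbv

lemma isMpSet_SR1 (hr : 3 ≤ r) : IsMpSet (masGraph r s) (Sset r s ∪ R1set r s) := by
  intro u v p hp
  by_contra hgt
  push_neg at hgt
  obtain ⟨a, b, c, ha, hb, hc, hab, hac, hbc⟩ := exists_three_of_two_lt hgt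
  obtain ⟨ia, hfa, hia⟩ := SimpleGraph.Walk.mem_support_iff_exists_getVert.mp ha.2
  obtain ⟨ib, hfb, hib⟩ := SimpleGraph.Walk.mem_support_iff_exists_getVert.mp hb.2
  obtain ⟨ic, hfc, hic⟩ := SimpleGraph.Walk.mem_support_iff_exists_getVert.mp hc.2
  have hiab : ia ≠ ib := fun h => hab (by rw [← hfa, ← hfb, h])
  have hiac : ia ≠ ic := fun h => hac (by rw [← hfa, ← hfc, h])
  have hibc : ib ≠ ic := fun h => hbc (by rw [← hfb, ← hfc, h])
  have haM := ha.1
  have hbM := hb.1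
  have hcM := hc.1
  rcases haM with ⟨ja, haS⟩ | ⟨ra, hra, haR⟩ <;>
    rcases hbM with ⟨jb, hbS⟩ | ⟨rb, hrb, hbR⟩ <;>
      rcases hcM with ⟨jc, hcS⟩ | ⟨rc, hrc, hcR⟩
  · exact claimSS hp hia hib hic (haS ▸ hfa) (hbS ▸ hfb) hiab hiac.symm hibc.symm
      (Or.inl ⟨jc, hcS ▸ hfc⟩)
  · exact claimSS hp hia hib hic (haS ▸ hfa) (hbS ▸ hfb) hiab hiac.symm hibc.symm
      (Or.inr ⟨rc, hcR ▸ hfc⟩)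
  · exact claimSS hp hia hic hib (haS ▸ hfa) (hcS ▸ hfc) hiac hiab.symm hibc
      (Or.inr ⟨rb, hbR ▸ hfb⟩)
  · exact claimSRR hp hia hib hic (haS ▸ hfa) (hbR ▸ hfb) (hcR ▸ hfc) hiab hiac hibc hrb hrc
  · exact claimSS hp hib hic hia (hbS ▸ hfb) (hcS ▸ hfc) hibc hiab hiac
      (Or.inr ⟨ra, haR ▸ hfa⟩)
  · exact claimSRR hp hib hia hic (hbS ▸ hfb) (haR ▸ hfa) (hcR ▸ hfc) hiab.symm hibc hiac hra hrc
  · exact claimSRR hp hic hia hib (hcS ▸ hfc) (haR ▸ hfa) (hbR ▸ hfb) hiac.symm hibc.symm hiab hra hrb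
  · exact claimC hp hia hib hic hiab hiac hibc (haR ▸ hfa) (hbR ▸ hfb) (hcR ▸ hfc)

end MpLower

end MasAux

namespace MasAux

section GpLower

variable {r s : ℕ}

lemma dist1 {α : Type*} {G : SimpleGraph α} {u w : α} (h : G.Adj u w) : G.dist u w ≤ 2 := by
  have := SimpleGraph.dist_le (SimpleGraph.Walk.cons h SimpleGraph.Walk.nil)
  simp at this
  omega

lemma dist2 {α : Type*} {G : SimpleGraph α} {u t w : α} (h1 : G.Adj u t) (h2 : G.Adj t w) :
    G.dist u w ≤ 2 := by
  have := SimpleGraph.dist_le (SimpleGraph.Walk.cons h1 (SimpleGraph.Walk.cons h2 SimpleGraph.Walk.nil))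
  simpa using this

lemma dist_le_two (hr : 3 ≤ r) (hs1 : 1 ≤ s) (u w : VV r s) :
    (masGraph r s).dist u w ≤ 2 := by
  have hc2 : 2 ≤ (r+1)/2 := by omega
  have hcr : (r+1)/2 ≤ r - 1 := by omega
  set j0 : Fin s := ⟨0, hs1⟩
  set p0 : Fin r := ⟨0, by omega⟩
  set pl : Fin r := ⟨r - 1, by omega⟩
  have hp0 : (p0 : ℕ) < (r+1)/2 := by simp [p0]; omega
  have hpl : (r+1)/2 ≤ (pl : ℕ) := by simp [pl]; omega
  rcases u with i | j | z
  · rcases w with i' | j' | z'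
    · by_cases h : i = i'
      · subst h; simp [SimpleGraph.dist_self]
      · exact dist1 (adj_ll.mpr h)
    · by_cases h : (i : ℕ) < (r+1)/2
      · exact dist2 (adj_lx.mpr h) adj_sx.symm
      · exact dist2 (adj_ly.mpr (by omega)) adj_sy.symm
    · fin_cases z'
      · by_cases h : (i : ℕ) < (r+1)/2
        · exact dist1 (adj_lx.mpr h)
        · refine dist2 (adj_ll.mpr ?_) (adj_lx.mpr hp0)
          intro he; rw [he] at h; simp [p0] at h; omega
      · by_cases h : (r+1)/2 ≤ (i : ℕ)
        · exact dist1 (adj_ly.mpr h)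
        · refine dist2 (adj_ll.mpr ?_) (adj_ly.mpr hpl)
          intro he; rw [he] at h; simp [pl] at h; omega
  · rcases w with i' | j' | z'
    · by_cases h : (i' : ℕ) < (r+1)/2
      · exact dist2 adj_sx (adj_lx.mpr h).symm
      · exact dist2 adj_sy (adj_ly.mpr (by omega)).symm
    · by_cases h : j = j'
      · subst h; simp [SimpleGraph.dist_self]
      · exact dist2 adj_sx adj_sx.symm
    · fin_cases z'
      · exact dist1 adj_sx
      · exact dist1 adj_sy
  · fin_cases z
    · rcases w with i' | j' | z'
      · by_cases h : (i' : ℕ) < (r+1)/2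
        · exact dist1 (adj_lx.mpr h).symm
        · refine dist2 (adj_lx.mpr hp0).symm (adj_ll.mpr ?_)
          intro he; rw [← he] at h; exact h hp0
      · exact dist1 adj_sx.symm
      · fin_cases z'
        · simp [SimpleGraph.dist_self, vx]
        · exact dist2 (adj_sx (j := j0)).symm adj_sy
    · rcases w with i' | j' | z'
      · by_cases h : (r+1)/2 ≤ (i' : ℕ)
        · exact dist1 (adj_ly.mpr h).symm
        · refine dist2 (adj_ly.mpr hpl).symm (adj_ll.mpr ?_)
          intro he; rw [← he] at h; exact h hpl
      · exact dist1 adj_sy.symm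
      · fin_cases z'
        · exact dist2 (adj_sy (j := j0)).symm adj_sx
        · simp [SimpleGraph.dist_self, vy]

lemma isGpSet_RS (hr : 3 ≤ r) (hs1 : 1 ≤ s) :
    IsGpSet (masGraph r s) (Rset r s ∪ Sset r s) := by
  intro u v p hp
  have hlen : p.length ≤ 2 := by
    rw [hp.2]; exact dist_le_two hr hs1 u v
  cases p with
  | nil =>
    refine ncard_le_two_of_subset_pair (a := u) (b := u) (fun w hw => ?_)
    simp only [SimpleGraph.Walk.support_nil, List.mem_singleton, Set.mem_setOf_eq,
      Set.mem_inter_iff] at hw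
    simp [hw.2]
  | cons hab q =>
    rename_i bb
    cases q with
    | nil =>
      refine ncard_le_two_of_subset_pair (a := u) (b := v) (fun w hw => ?_)
      simp only [SimpleGraph.Walk.support_cons, SimpleGraph.Walk.support_nil, List.mem_cons,
        List.mem_singleton, Set.mem_setOf_eq, Set.mem_inter_iff, List.not_mem_nil, or_false] at hw
      simp [hw.2]
    | cons hbc q2 =>
      rename_i cc
      cases q2 with
      | cons h3 q3 =>
        exfalso
        simp only [SimpleGraph.Walk.length_cons] at hlen
        omega
      | nil =>
  have hdist : (masGraph r s).dist u v = 2 := by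
    have := hp.2; simpa using this.symm
  have hnadj : ¬ (masGraph r s).Adj u v := by
    intro h'
    rw [SimpleGraph.dist_eq_one_iff_adj.mpr h'] at hdist
    omega
  have hnuc : u ≠ v := by
    rintro rfl
    rw [SimpleGraph.dist_self] at hdist
    omega
  have hsupp : ∀ w : VV r s, w ∈ (SimpleGraph.Walk.cons hab (SimpleGraph.Walk.cons hbc
      SimpleGraph.Walk.nil)).support ↔ (w = u ∨ w = bb ∨ w = v) := by
    intro w
    simp [SimpleGraph.Walk.support_cons]
  rcases bb with i | j | z
  · -- middle in R
    have hkey : u ∉ Rset r s ∪ Sset r s ∨ v ∉ Rset r s ∪ Sset r s := by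
      by_contra hcon
      push_neg at hcon
      obtain ⟨hu, hc'⟩ := hcon
      have hu' : ∃ iu : Fin r, u = .inl iu := by
        rcases hu with ⟨iu, rfl⟩ | ⟨ju, rfl⟩
        · exact ⟨iu, rfl⟩
        · exact absurd hab.symm not_adj_ls
      have hc'' : ∃ ic : Fin r, v = .inl ic := by
        rcases hc' with ⟨ic, rfl⟩ | ⟨jc, rfl⟩
        · exact ⟨ic, rfl⟩
        · exact absurd hbc not_adj_ls
      obtain ⟨iu, rfl⟩ := hu'
      obtain ⟨ic, rfl⟩ := hc''
      exact hnadj (adj_ll.mpr (fun h' => hnuc (by rw [h'])))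
    rcases hkey with hk | hk
    · refine ncard_le_two_of_subset_pair (a := Sum.inl i) (b := v) (fun w hw => ?_)
      rw [Set.mem_inter_iff, Set.mem_setOf_eq, hsupp w] at hw
      rcases hw.2 with rfl | rfl | rfl
      · exact absurd hw.1 hk
      · exact Or.inl rfl
      · exact Or.inr rfl
    · refine ncard_le_two_of_subset_pair (a := u) (b := Sum.inl i) (fun w hw => ?_)
      rw [Set.mem_inter_iff, Set.mem_setOf_eq, hsupp w] at hw
      rcases hw.2 with rfl | rfl | rfl
      · exact Or.inl rfl
      · exact Or.inr rfl
      · exact absurd hw.1 hk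
  · -- middle in S : u ∈ {vx, vy} so u ∉ T
    have hu : u ∉ Rset r s ∪ Sset r s := by
      rcases adj_s_cases hab with rfl | rfl <;>
        rintro (⟨iu, hu⟩ | ⟨ju, hu⟩) <;> simp [vx, vy] at hu
    refine ncard_le_two_of_subset_pair (a := Sum.inr (Sum.inl j)) (b := v) (fun w hw => ?_)
    rw [Set.mem_inter_iff, Set.mem_setOf_eq, hsupp w] at hw
    rcases hw.2 with rfl | rfl | rfl
    · exact absurd hw.1 hu
    · exact Or.inl rfl
    · exact Or.inr rfl
  · -- middle is vx or vy : not in T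
    have hb' : (Sum.inr (Sum.inr z) : VV r s) ∉ Rset r s ∪ Sset r s := by
      rintro (⟨iu, hu⟩ | ⟨ju, hu⟩) <;> simp at hu
    refine ncard_le_two_of_subset_pair (a := u) (b := v) (fun w hw => ?_)
    rw [Set.mem_inter_iff, Set.mem_setOf_eq, hsupp w] at hw
    rcases hw.2 with rfl | rfl | rfl
    · exact Or.inl rfl
    · exact absurd hw.1 hb'
    · exact Or.inr rfl

end GpLower

end MasAux

namespace MasAux

section Upper

variable {r s : ℕ}

lemma S_elt {T : Set (VV r s)} (h : (T ∩ Sset r s).ncard ≠ 0) :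
    ∃ j : Fin s, Sum.inr (Sum.inl j) ∈ T := by
  obtain ⟨w, hw⟩ := Set.nonempty_of_ncard_ne_zero h
  obtain ⟨j, rfl⟩ := hw.2
  exact ⟨j, hw.1⟩

lemma S_two {T : Set (VV r s)} (h : 1 < (T ∩ Sset r s).ncard) :
    ∃ j j' : Fin s, j ≠ j' ∧ Sum.inr (Sum.inl j) ∈ T ∧ Sum.inr (Sum.inl j') ∈ T := by
  obtain ⟨a, b, ha, hb, hab⟩ := (Set.one_lt_ncard_iff (Set.toFinite _)).mp h
  obtain ⟨j, rfl⟩ := ha.2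
  obtain ⟨j', rfl⟩ := hb.2
  exact ⟨j, j', fun hh => hab (by rw [hh]), ha.1, hb.1⟩

lemma R1_elt {T : Set (VV r s)} (h : (T ∩ R1set r s).ncard ≠ 0) :
    ∃ i : Fin r, (i:ℕ) < (r+1)/2 ∧ Sum.inl i ∈ T := by
  obtain ⟨w, hw⟩ := Set.nonempty_of_ncard_ne_zero h
  obtain ⟨i, hi, rfl⟩ := hw.2
  exact ⟨i, hi, hw.1⟩

lemma R2_elt {T : Set (VV r s)} (h : (T ∩ R2set r s).ncard ≠ 0) :
    ∃ i : Fin r, (r+1)/2 ≤ (i:ℕ) ∧ Sum.inl i ∈ T := by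
  obtain ⟨w, hw⟩ := Set.nonempty_of_ncard_ne_zero h
  obtain ⟨i, hi, rfl⟩ := hw.2
  exact ⟨i, hi, hw.1⟩

lemma xy_ncard_single {T : Set (VV r s)} (hy : vy ∉ T) : (T ∩ XYset r s).ncard ≤ 1 := by
  refine le_trans (Set.ncard_le_ncard ?_ (Set.finite_singleton vx)) (by simp)
  rintro w ⟨hwT, hw2⟩
  simp only [XYset, Set.mem_insert_iff, Set.mem_singleton_iff] at hw2
  rcases hw2 with rfl | rfl
  · rfl
  · exact absurd hwT hy

lemma xy_ncard_single' {T : Set (VV r s)} (hx : vx ∉ T) : (T ∩ XYset r s).ncard ≤ 1 := by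
  refine le_trans (Set.ncard_le_ncard ?_ (Set.finite_singleton vy)) (by simp)
  rintro w ⟨hwT, hw2⟩
  simp only [XYset, Set.mem_insert_iff, Set.mem_singleton_iff] at hw2
  rcases hw2 with rfl | rfl
  · exact absurd hwT hx
  · rfl

lemma xy_ncard_zero {T : Set (VV r s)} (hx : vx ∉ T) (hy : vy ∉ T) :
    (T ∩ XYset r s).ncard = 0 := by
  have : T ∩ XYset r s = ∅ := by
    rw [Set.eq_empty_iff_forall_notMem]
    rintro w ⟨hwT, hw2⟩
    simp only [XYset, Set.mem_insert_iff, Set.mem_singleton_iff] at hw2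
    rcases hw2 with rfl | rfl
    · exact hx hwT
    · exact hy hwT
  simp [this]

lemma gp_upper (hr : 3 ≤ r) (hs : r/2 ≤ s) {T : Set (VV r s)}
    (hT : IsGpSet (masGraph r s) T) : T.ncard ≤ r + s := by
  have hcr : (r+1)/2 ≤ r := by omega
  have htot := ncard_le_parts T
  have h1 := ncard_inter_R1 T hcr
  have h2 := ncard_inter_R2 T hcr
  have h3 := ncard_inter_S T
  have hG2 : vx ∈ T → (T ∩ R1set r s).ncard = 0 ∨ (T ∩ R2set r s).ncard = 0 := by
    intro hxT
    by_contra hcon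
    push_neg at hcon
    obtain ⟨i1, hi1, hi1T⟩ := R1_elt hcon.1
    obtain ⟨i2, hi2, hi2T⟩ := R2_elt hcon.2
    have hne12 : i1 ≠ i2 := fun h => by subst h; omega
    exact gp_no_three hT (geo2 (adj_lx.mpr hi1).symm (adj_ll.mpr hne12)
        (fun h' => by have := adj_lx.mp h'.symm; omega) (by simp [vx]))
      hxT hi1T hi2T (by simp) (by simp) (by simp)
      (by simp [vx]) (by simp [vx]) (by simpa using hne12)
  have hG3 : vy ∈ T → (T ∩ R1set r s).ncard = 0 ∨ (T ∩ R2set r s).ncard = 0 := by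
    intro hyT
    by_contra hcon
    push_neg at hcon
    obtain ⟨i1, hi1, hi1T⟩ := R1_elt hcon.1
    obtain ⟨i2, hi2, hi2T⟩ := R2_elt hcon.2
    have hne12 : i2 ≠ i1 := fun h => by subst h; omega
    exact gp_no_three hT (geo2 (adj_ly.mpr hi2).symm (adj_ll.mpr hne12)
        (fun h' => by have := adj_ly.mp h'.symm; omega) (by simp [vy]))
      hyT hi2T hi1T (by simp) (by simp) (by simp)
      (by simp [vy]) (by simp [vy]) (by simpa using hne12)
  by_cases hx : vx ∈ T <;> by_cases hy : vy ∈ T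
  · have hb0 : (T ∩ Sset r s).ncard = 0 := by
      by_contra hb
      obtain ⟨j, hjT⟩ := S_elt hb
      exact gp_no_three hT (geo2 (adj_sx (j := j)).symm (adj_sy (j := j)) not_adj_xy (by simp [vx, vy]))
        hx hjT hy (by simp) (by simp) (by simp)
        (by simp [vx]) (by simp [vx, vy]) (by simp [vy])
    have ha := hG2 hx
    have hxy := ncard_inter_XY T
    omega
  · have hxy := xy_ncard_single (T := T) hy
    have hb1 : (T ∩ Sset r s).ncard ≤ 1 := by
      by_contra hb
      push_neg at hb
      obtain ⟨j, j', hjj, hjT, hjT'⟩ := S_two hb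
      exact gp_no_three hT (geo2 (adj_sx (j := j)) (adj_sx (j := j')).symm not_adj_ss
          (by simpa using hjj))
        hjT hx hjT' (by simp) (by simp) (by simp)
        (by simp [vx]) (by simpa using hjj) (by simp [vx])
    have ha := hG2 hx
    omega
  · have hxy := xy_ncard_single' (T := T) hx
    have hb1 : (T ∩ Sset r s).ncard ≤ 1 := by
      by_contra hb
      push_neg at hb
      obtain ⟨j, j', hjj, hjT, hjT'⟩ := S_two hb
      exact gp_no_three hT (geo2 (adj_sy (j := j)) (adj_sy (j := j')).symm not_adj_ss
          (by simpa using hjj))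
        hjT hy hjT' (by simp) (by simp) (by simp)
        (by simp [vy]) (by simpa using hjj) (by simp [vy])
    have ha := hG3 hy
    omega
  · have hxy := xy_ncard_zero hx hy
    omega

lemma mp_upper (hr : 3 ≤ r) (hs : r/2 ≤ s) {M : Set (VV r s)}
    (hM : IsMpSet (masGraph r s) M) : M.ncard ≤ s + (r+1)/2 := by
  have hcr : (r+1)/2 ≤ r := by omega
  have hc2 : 2 ≤ (r+1)/2 := by omega
  have hcrl : (r+1)/2 ≤ r - 1 := by omega
  set p0 : Fin r := ⟨0, by omega⟩ with hp0def
  set pl : Fin r := ⟨r - 1, by omega⟩ with hpldef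
  have hp0 : (p0 : ℕ) < (r+1)/2 := by simp [hp0def]; omega
  have hpl : (r+1)/2 ≤ (pl : ℕ) := by simp [hpldef]; omega
  have htot := ncard_le_parts M
  have h1 := ncard_inter_R1 M hcr
  have h2 := ncard_inter_R2 M hcr
  have h3 := ncard_inter_S M
  by_cases hx : vx ∈ M <;> by_cases hy : vy ∈ M
  · -- both vx, vy
    have hb0 : (M ∩ Sset r s).ncard = 0 := by
      by_contra hb
      obtain ⟨j, hjT⟩ := S_elt hb
      exact mp_no_three hM (induced2 (adj_sx (j := j)).symm (adj_sy (j := j)) not_adj_xy (by simp [vx, vy]))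
        hx hjT hy (by simp) (by simp) (by simp)
        (by simp [vx]) (by simp [vx, vy]) (by simp [vy])
    have ha1 : (M ∩ R1set r s).ncard = 0 := by
      by_contra ha
      obtain ⟨i1, hi1, hi1T⟩ := R1_elt ha
      have hne : i1 ≠ pl := fun h => by rw [h] at hi1; omega
      exact mp_no_three hM (induced3 (adj_lx.mpr hi1).symm (adj_ll.mpr hne) (adj_ly.mpr hpl)
          (fun h' => by have := adj_lx.mp h'.symm; omega) not_adj_xy
          (fun h' => by have := adj_ly.mp h'; omega)
          (by simp [vx]) (by simp [vx, vy]) (by simp [vy]))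
        hx hi1T hy (by simp) (by simp) (by simp)
        (by simp [vx]) (by simp [vx, vy]) (by simp [vy])
    have ha2 : (M ∩ R2set r s).ncard = 0 := by
      by_contra ha
      obtain ⟨i2, hi2, hi2T⟩ := R2_elt ha
      have hne : p0 ≠ i2 := fun h => by rw [← h] at hi2; omega
      exact mp_no_three hM (induced3 (adj_lx.mpr hp0).symm (adj_ll.mpr hne) (adj_ly.mpr hi2)
          (fun h' => by have := adj_lx.mp h'.symm; omega) not_adj_xy
          (fun h' => by have := adj_ly.mp h'; omega)
          (by simp [vx]) (by simp [vx, vy]) (by simp [vy]))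
        hx hi2T hy (by simp) (by simp) (by simp)
        (by simp [vx]) (by simp [vx, vy]) (by simp [vy])
    have hxy := ncard_inter_XY M
    omega
  · -- only vx
    have hxy := xy_ncard_single (T := M) hy
    by_cases hb : (M ∩ Sset r s).ncard = 0
    · have ha : (M ∩ R1set r s).ncard = 0 ∨ (M ∩ R2set r s).ncard = 0 := by
        by_contra hcon
        push_neg at hcon
        obtain ⟨i1, hi1, hi1T⟩ := R1_elt hcon.1
        obtain ⟨i2, hi2, hi2T⟩ := R2_elt hcon.2
        have hne12 : i1 ≠ i2 := fun h => by subst h; omega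
        exact mp_no_three hM (induced2 (adj_lx.mpr hi1).symm (adj_ll.mpr hne12)
            (fun h' => by have := adj_lx.mp h'.symm; omega) (by simp [vx]))
          hx hi1T hi2T (by simp) (by simp) (by simp)
          (by simp [vx]) (by simp [vx]) (by simpa using hne12)
      omega
    · have hb1 : (M ∩ Sset r s).ncard ≤ 1 := by
        by_contra hbb
        push_neg at hbb
        obtain ⟨j, j', hjj, hjT, hjT'⟩ := S_two hbb
        exact mp_no_three hM (induced2 (adj_sx (j := j)) (adj_sx (j := j')).symm not_adj_ss
            (by simpa using hjj))
          hjT hx hjT' (by simp) (by simp) (by simp)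
          (by simp [vx]) (by simpa using hjj) (by simp [vx])
      obtain ⟨j, hjT⟩ := S_elt hb
      have ha1 : (M ∩ R1set r s).ncard = 0 := by
        by_contra ha
        obtain ⟨i1, hi1, hi1T⟩ := R1_elt ha
        exact mp_no_three hM (induced2 (adj_sx (j := j)) (adj_lx.mpr hi1).symm
            (fun h' => not_adj_ls h'.symm) (by simp))
          hjT hx hi1T (by simp) (by simp) (by simp)
          (by simp [vx]) (by simp) (by simp [vx])
      have ha2 : (M ∩ R2set r s).ncard = 0 := by
        by_contra ha
        obtain ⟨i2, hi2, hi2T⟩ := R2_elt ha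
        have hne : p0 ≠ i2 := fun h => by rw [← h] at hi2; omega
        exact mp_no_three hM (induced3 (adj_sx (j := j)) (adj_lx.mpr hp0).symm (adj_ll.mpr hne)
            (fun h' => not_adj_ls h'.symm) (fun h' => not_adj_ls h'.symm)
            (fun h' => by have := adj_lx.mp h'.symm; omega)
            (by simp) (by simp) (by simp [vx]))
          hjT hx hi2T (by simp) (by simp) (by simp)
          (by simp [vx]) (by simp) (by simp [vx])
      omega
  · -- only vy
    have hxy := xy_ncard_single' (T := M) hx
    by_cases hb : (M ∩ Sset r s).ncard = 0
    · have ha : (M ∩ R1set r s).ncard = 0 ∨ (M ∩ R2set r s).ncard = 0 := by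
        by_contra hcon
        push_neg at hcon
        obtain ⟨i1, hi1, hi1T⟩ := R1_elt hcon.1
        obtain ⟨i2, hi2, hi2T⟩ := R2_elt hcon.2
        have hne12 : i2 ≠ i1 := fun h => by subst h; omega
        exact mp_no_three hM (induced2 (adj_ly.mpr hi2).symm (adj_ll.mpr hne12)
            (fun h' => by have := adj_ly.mp h'.symm; omega) (by simp [vy]))
          hy hi2T hi1T (by simp) (by simp) (by simp)
          (by simp [vy]) (by simp [vy]) (by simpa using hne12)
      omega
    · have hb1 : (M ∩ Sset r s).ncard ≤ 1 := by
        by_contra hbb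
        push_neg at hbb
        obtain ⟨j, j', hjj, hjT, hjT'⟩ := S_two hbb
        exact mp_no_three hM (induced2 (adj_sy (j := j)) (adj_sy (j := j')).symm not_adj_ss
            (by simpa using hjj))
          hjT hy hjT' (by simp) (by simp) (by simp)
          (by simp [vy]) (by simpa using hjj) (by simp [vy])
      obtain ⟨j, hjT⟩ := S_elt hb
      have ha2 : (M ∩ R2set r s).ncard = 0 := by
        by_contra ha
        obtain ⟨i2, hi2, hi2T⟩ := R2_elt ha
        exact mp_no_three hM (induced2 (adj_sy (j := j)) (adj_ly.mpr hi2).symm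
            (fun h' => not_adj_ls h'.symm) (by simp))
          hjT hy hi2T (by simp) (by simp) (by simp)
          (by simp [vy]) (by simp) (by simp [vy])
      have ha1 : (M ∩ R1set r s).ncard = 0 := by
        by_contra ha
        obtain ⟨i1, hi1, hi1T⟩ := R1_elt ha
        have hne : pl ≠ i1 := fun h => by rw [← h] at hi1; omega
        exact mp_no_three hM (induced3 (adj_sy (j := j)) (adj_ly.mpr hpl).symm (adj_ll.mpr hne)
            (fun h' => not_adj_ls h'.symm) (fun h' => not_adj_ls h'.symm)
            (fun h' => by have := adj_ly.mp h'.symm; omega)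
            (by simp) (by simp) (by simp [vy]))
          hjT hy hi1T (by simp) (by simp) (by simp)
          (by simp [vy]) (by simp) (by simp [vy])
      omega
  · -- neither
    have hxy := xy_ncard_zero hx hy
    by_cases hb : (M ∩ Sset r s).ncard = 0
    · omega
    · obtain ⟨j, hjT⟩ := S_elt hb
      have ha : (M ∩ R1set r s).ncard = 0 ∨ (M ∩ R2set r s).ncard = 0 := by
        by_contra hcon
        push_neg at hcon
        obtain ⟨i1, hi1, hi1T⟩ := R1_elt hcon.1
        obtain ⟨i2, hi2, hi2T⟩ := R2_elt hcon.2
        have hne : i1 ≠ i2 := fun h => by subst h; omega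
        exact mp_no_three hM (induced3 (adj_sx (j := j)) (adj_lx.mpr hi1).symm (adj_ll.mpr hne)
            (fun h' => not_adj_ls h'.symm) (fun h' => not_adj_ls h'.symm)
            (fun h' => by have := adj_lx.mp h'.symm; omega)
            (by simp) (by simp) (by simp [vx]))
          hjT hi1T hi2T (by simp) (by simp) (by simp)
          (by simp) (by simp) (by simpa using hne)
      omega

end Upper

end MasAux

theorem masGraph_mpNum_gpNum (r s : ℕ) (hr : 3 ≤ r) (hs : r / 2 ≤ s) :
    mpNum (masGraph r s) = s + (r + 1) / 2 ∧ gpNum (masGraph r s) = r + s := by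
  have hcr : (r+1)/2 ≤ r := by omega
  have hs1 : 1 ≤ s := by omega
  constructor
  · apply IsGreatest.csSup_eq
    constructor
    · exact ⟨_, MasAux.isMpSet_SR1 hr, MasAux.ncard_SR1 hcr⟩
    · rintro n ⟨S, hS, rfl⟩
      exact MasAux.mp_upper hr hs hS
  · apply IsGreatest.csSup_eq
    constructor
    · exact ⟨_, MasAux.isGpSet_RS hr hs1, MasAux.ncard_RS⟩
    · rintro n ⟨S, hS, rfl⟩
      exact MasAux.gp_upper hr hs hS
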